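/- Let X₁ be a set of rank one valuation rings in Zar(F) and X₂ a nonempty subset of Zar(F) such that J(X₂) = ⋂_{V∈X₂} 𝔪_V ≠ 0 and every patch limit point of X₁ lies in X₂. If A = A(X₁) ∩ A(X₂) is a local domain, then A = A(X₂). -/

import Mathlib

open Set

/-- A subring `V` of a field `F` is a valuation ring of `F` (with quotient field `F`). -/
def IsValSubring (F : Type*) [Field F] (V : Subring F) : Prop :=
  ∀ t : F, t ≠ 0 → t ∈ V ∨ t⁻¹ ∈ V

/-- The Zariski-Riemann space of the field `F`: the set of valuation rings of `F`. -/
def Zar (F : Type*) [Field F] : Type _ := {V : Subring F // IsValSubring F V}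

/-- The patch (constructible) topology on `Zar F`, generated by the sets
`{V : x ∈ V}` and `{V : y ∉ V}` for `x, y ∈ F`. -/
instance Zar.patchTopology (F : Type*) [Field F] : TopologicalSpace (Zar F) :=
  TopologicalSpace.generateFrom
    ({S | ∃ x : F, S = {V : Zar F | x ∈ V.1}} ∪ {S | ∃ y : F, S = {V : Zar F | y ∉ V.1}})

variable {F : Type*} [Field F]

/-- The maximal ideal of a valuation ring of `F`, as a subset of `F`. -/
def mIdeal (V : Zar F) : Set F := {x : F | x ∈ V.1 ∧ (x = 0 ∨ x⁻¹ ∉ V.1)}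

/-- `A(X)`: the intersection of the valuation rings in `X`, as a subset of `F`. -/
def aSet (X : Set (Zar F)) : Set F := ⋂ V ∈ X, ((V : Zar F).1 : Set F)

/-- `A(X)` as a subring of `F`. -/
def ASub (X : Set (Zar F)) : Subring F := ⨅ V ∈ X, (V : Zar F).1

/-- `J(X)`: the intersection of the maximal ideals of the valuation rings in `X`. -/
def jSet (X : Set (Zar F)) : Set F := ⋂ V ∈ X, mIdeal V

/-- The set of limit points of `X` in the patch topology of `Zar F`. -/
def limPts (X : Set (Zar F)) : Set (Zar F) :=
  {V : Zar F | ∀ U : Set (Zar F), IsOpen U → V ∈ U → ∃ W ∈ X, W ≠ V ∧ W ∈ U}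


/-- A valuation ring of `F` has rank one iff it is a maximal proper valuation subring of `F`. -/
def RankOne (V : Zar F) : Prop :=
  V.1 ≠ ⊤ ∧ ∀ W : Zar F, V.1 ≤ W.1 → W.1 ≠ ⊤ → W.1 = V.1

/-!
Suppose `a ∈ A(X₂)` but `a ∉ W₁` for some `W₁ ∈ X₁`, and pick `0 ≠ j ∈ J(X₂)`. The rings
`W ∈ X₁` with `a ∉ W` or `j ∉ 𝔪_W` form the trace on `X₁` of a patch-closed set disjoint from
`X₂`, which contains the limit points of `X₁`; by patch compactness they form a finite set `E`.
Replacing `j` by a suitable iterate `c` of `x ↦ x (1 + x)` keeps `1 + c` out of `𝔪_W` for all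
`W ∈ E`. Then `s = c a^N`, with `N` large (as `W₁` has rank one) and divisible by the order of
`a` in every residue field of `E` where `a` is a root of unity, satisfies `s ∉ W₁`, `s ∈ J(X₂)`
and `1 + s ∉ 𝔪_W` for all `W ∈ X₁`. So `u = (1 + s)⁻¹ ∈ A`, but neither `u` nor `1 - u` is a
unit of `A`.
-/

open Filter Topology

lemma Set.subsingleton_of_forall_lt_notMem {α : Type*} [LinearOrder α] {S : Set α}
    (h : ∀ k l, k < l → k ∈ S → l ∉ S) : S.Subsingleton := by
  intro k hk l hl
  by_contra hne
  rcases lt_or_gt_of_ne hne with hkl | hkl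
  · exact h k l hkl hk hl
  · exact h l k hkl hl hk

lemma exists_ge_forall_notMem {ι : Type*} {E : Set ι} (hE : E.Finite) {B : ι → Set ℕ}
    (hB : ∀ i ∈ E, (B i).Finite) (n₀ : ℕ) : ∃ n ≥ n₀, ∀ i ∈ E, n ∉ B i := by
  obtain ⟨n, hn, hlt⟩ := (hE.biUnion hB).infinite_compl.exists_gt n₀
  exact ⟨n, hlt.le, fun i hi hni => hn (mem_biUnion hi hni)⟩

namespace Valuation

variable {R Γ₀ : Type*} [CommRing R] [LinearOrderedCommGroupWithZero Γ₀] (v : Valuation R Γ₀)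

lemma map_eq_one_of_map_one_add_lt_one {x : R} (h : v (1 + x) < 1) : v x = 1 := by
  simpa using v.map_sub_eq_of_lt_right (x := 1 + x) (y := 1) (by rwa [v.map_one])

lemma map_iterate_mul_one_add {x : R} (h : v x < 1) (k : ℕ) :
    v ((fun y => y * (1 + y))^[k] x) = v x := by
  induction k with
  | zero => rfl
  | succ k ih =>
    rw [Function.iterate_succ_apply', map_mul, v.map_one_add_of_lt (ih ▸ h), mul_one, ih]

lemma subsingleton_setOf_map_one_add_iterate_lt_one (x : R) :
    {k | v (1 + (fun y => y * (1 + y))^[k] x) < 1}.Subsingleton := by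
  set f : R → R := fun y => y * (1 + y)
  -- once `1 + y` lies in the maximal ideal, so do `f y` and all its iterates
  have key : ∀ k l, k < l → v (1 + f^[k] x) < 1 → 1 ≤ v (1 + f^[l] x) := by
    intro k l hkl hk
    obtain ⟨m, rfl⟩ := Nat.exists_eq_add_of_lt hkl
    have hk' : v (f^[k + 1] x) < 1 := by
      rwa [Function.iterate_succ_apply', map_mul, v.map_eq_one_of_map_one_add_lt_one hk, one_mul]
    rw [show k + m + 1 = m + (k + 1) by omega, Function.iterate_add_apply,
      v.map_one_add_of_lt (by rwa [v.map_iterate_mul_one_add hk'])]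
  exact Set.subsingleton_of_forall_lt_notMem fun k l hkl hk => (key k l hkl hk).not_gt

lemma map_pow_sub_one_lt_one_of_map_one_add_mul_pow_lt_one {a c : R} {n d : ℕ}
    (hn : v (1 + c * a ^ n) < 1) (hnd : v (1 + c * a ^ (n + d)) < 1) : v (a ^ d - 1) < 1 := by
  have hdiff : v (c * a ^ n * (a ^ d - 1)) < 1 := by
    rw [show c * a ^ n * (a ^ d - 1) = (1 + c * a ^ (n + d)) - (1 + c * a ^ n) by ring]
    exact v.map_sub_lt hnd hn
  rwa [map_mul, v.map_eq_one_of_map_one_add_lt_one hn, one_mul] at hdiff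

lemma subsingleton_setOf_map_one_add_mul_pow_lt_one {a : R} (ha : ∀ d, 0 < d → 1 ≤ v (a ^ d - 1))
    (c : R) : {n | v (1 + c * a ^ n) < 1}.Subsingleton := by
  have key : ∀ n l, n < l → v (1 + c * a ^ n) < 1 → 1 ≤ v (1 + c * a ^ l) := by
    intro n l hnl hn
    by_contra! hl
    obtain ⟨d, rfl⟩ := Nat.exists_eq_add_of_lt hnl
    exact (ha (d + 1) d.succ_pos).not_gt
      (v.map_pow_sub_one_lt_one_of_map_one_add_mul_pow_lt_one hn (by rwa [add_assoc] at hl))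
  exact Set.subsingleton_of_forall_lt_notMem fun n l hnl hn => (key n l hnl hn).not_gt

lemma map_pow_sub_one_lt_one {b : R} (h : v (b - 1) < 1) (t : ℕ) : v (b ^ t - 1) < 1 := by
  have hb : v b = 1 := by simpa using v.map_one_add_of_lt h
  rw [← geom_sum_mul, map_mul]
  exact Right.mul_lt_one_of_le_of_lt (v.map_sum_le fun i _ => by rw [map_pow, hb, one_pow]) h

lemma map_one_add_lt_one_of_map_sub_one_lt_one {b c : R} (hb : v (b - 1) < 1)
    (hcb : v (1 + c * b) < 1) : v (1 + c) < 1 := by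
  have hb1 : v b = 1 := by simpa using v.map_one_add_of_lt hb
  have hc1 : v c = 1 := by
    simpa [hb1] using v.map_eq_one_of_map_one_add_lt_one hcb
  rw [show 1 + c = (1 + c * b) - c * (b - 1) by ring]
  exact v.map_sub_lt hcb (by rwa [map_mul, hc1, one_mul])

end Valuation

lemma Subring.inv_mem_or_inv_one_sub_mem {A : Subring F} [IsLocalRing A] {u : F} (hu : u ∈ A) :
    u⁻¹ ∈ A ∨ (1 - u)⁻¹ ∈ A :=
  (IsLocalRing.isUnit_or_isUnit_one_sub_self (⟨u, hu⟩ : A)).imp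
    Submonoid.inv_mem_of_isUnit Submonoid.inv_mem_of_isUnit

namespace RankOne

variable {V : Zar F} {a c : F}

lemma exists_mul_pow_notMem (hV : RankOne V) (ha : a ∉ V.1) (hc : c ≠ 0) :
    ∃ n, c * a ^ n ∉ V.1 := by
  -- otherwise `c • V[a] ⊆ V`, so `V[a]` is a proper valuation ring strictly containing `V`
  by_contra! h
  let B : Subring F := (Algebra.adjoin V.1 {a}).toSubring
  have hVB : V.1 ≤ B := fun x hx => Subalgebra.algebraMap_mem _ (⟨x, hx⟩ : V.1)
  have hcB : ∀ b ∈ B, c * b ∈ V.1 := by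
    intro b hb
    obtain ⟨p, rfl⟩ := (AlgHom.mem_range _).mp <| show b ∈ (Polynomial.aeval (R := V.1) a).range by
      rwa [← Algebra.adjoin_singleton_eq_range_aeval]
    clear hb
    induction p using Polynomial.induction_on' with
    | add p q hp hq => rw [map_add, mul_add]; exact add_mem hp hq
    | monomial n r =>
      rw [Polynomial.aeval_monomial, mul_left_comm]
      exact mul_mem r.2 (h n)
  have hB : B ≠ ⊤ := fun htop => hV.1 <| eq_top_iff.mpr fun x _ => by
    simpa [hc] using hcB (c⁻¹ * x) (htop ▸ Subring.mem_top _)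
  have hBV := hV.2 ⟨B, fun t ht => (V.2 t ht).imp (@hVB t) (@hVB t⁻¹)⟩ hVB hB
  exact ha (hBV ▸ Algebra.subset_adjoin rfl)

lemma exists_forall_ge_mul_pow_notMem (hV : RankOne V) (ha : a ∉ V.1) (hc : c ≠ 0) :
    ∃ n₀, ∀ n ≥ n₀, c * a ^ n ∉ V.1 := by
  obtain ⟨n₀, hn₀⟩ := hV.exists_mul_pow_notMem ha hc
  have ha0 : a ≠ 0 := by rintro rfl; exact ha V.1.zero_mem
  refine ⟨n₀, fun n hn hmem => hn₀ ?_⟩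
  obtain ⟨k, rfl⟩ := Nat.exists_eq_add_of_le hn
  rw [show c * a ^ n₀ = c * a ^ (n₀ + k) * a⁻¹ ^ k by
    rw [pow_add, ← mul_assoc, inv_pow, mul_inv_cancel_right₀ (pow_ne_zero k ha0)]]
  exact mul_mem hmem (pow_mem ((V.2 a ha0).resolve_left ha) k)

end RankOne

namespace Zar

def toValuationSubring (V : Zar F) : ValuationSubring F where
  toSubring := V.1
  mem_or_inv_mem' x := by
    rcases eq_or_ne x 0 with rfl | hx
    · exact Or.inl V.1.zero_mem
    · exact V.2 x hx

noncomputable def valuation (V : Zar F) : Valuation F V.toValuationSubring.ValueGroup :=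
  V.toValuationSubring.valuation

variable {V : Zar F} {x : F}

lemma valuation_le_one_iff : V.valuation x ≤ 1 ↔ x ∈ V.1 :=
  V.toValuationSubring.valuation_le_one_iff x

lemma valuation_lt_one_iff : V.valuation x < 1 ↔ x ∈ mIdeal V :=
  ⟨fun h => ⟨valuation_le_one_iff.mp h.le, V.toValuationSubring.mem_nonunits_iff_or.mp h⟩,
    fun h => V.toValuationSubring.mem_nonunits_iff_or.mpr h.2⟩

lemma inv_mem_of_one_le_valuation (h : 1 ≤ V.valuation x) : x⁻¹ ∈ V.1 :=
  valuation_le_one_iff.mp (by rw [map_inv₀]; exact inv_le_one_of_one_le₀ h)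

lemma mem_ASub {X : Set (Zar F)} : x ∈ ASub X ↔ ∀ V ∈ X, x ∈ V.1 := by
  simp [ASub, Subring.mem_iInf]

lemma exists_mem_jSet_ne_zero {X : Set (Zar F)} (h : jSet X ≠ {0}) : ∃ j ∈ jSet X, j ≠ 0 := by
  by_contra! h'
  exact h (eq_singleton_iff_unique_mem.mpr
    ⟨mem_iInter₂.mpr fun V _ => ⟨V.1.zero_mem, Or.inl rfl⟩, h'⟩)

lemma isOpen_setOf_mem (x : F) : IsOpen {V : Zar F | x ∈ V.1} :=
  TopologicalSpace.isOpen_generateFrom_of_mem (Or.inl ⟨x, rfl⟩)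

lemma isOpen_setOf_notMem (x : F) : IsOpen {V : Zar F | x ∉ V.1} :=
  TopologicalSpace.isOpen_generateFrom_of_mem (Or.inr ⟨x, rfl⟩)

lemma isOpen_setOf_valuation_le_one (x : F) : IsOpen {V : Zar F | V.valuation x ≤ 1} := by
  have : {V : Zar F | V.valuation x ≤ 1} = {V | x ∈ V.1} := ext fun _ => valuation_le_one_iff
  exact this ▸ isOpen_setOf_mem x

lemma isOpen_setOf_valuation_lt_one {x : F} (hx : x ≠ 0) :
    IsOpen {V : Zar F | V.valuation x < 1} := by
  have : {V : Zar F | V.valuation x < 1} = {V | x⁻¹ ∉ V.1} := by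
    ext V
    rw [mem_ofPred_eq, mem_ofPred_eq, ← valuation_le_one_iff, not_le,
      V.valuation.one_lt_val_iff (inv_ne_zero hx), inv_inv]
  exact this ▸ isOpen_setOf_notMem x⁻¹

def limUltrafilter (𝒰 : Ultrafilter (Zar F)) : Zar F where
  val :=
    { carrier := {x | {W : Zar F | x ∈ W.1} ∈ 𝒰}
      one_mem' := univ_mem' fun W => W.1.one_mem
      zero_mem' := univ_mem' fun W => W.1.zero_mem
      add_mem' := fun hx hy => mem_of_superset (inter_mem hx hy) fun W hW => W.1.add_mem hW.1 hW.2
      mul_mem' := fun hx hy => mem_of_superset (inter_mem hx hy) fun W hW => W.1.mul_mem hW.1 hW.2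
      neg_mem' := fun hx => mem_of_superset hx fun W hW => W.1.neg_mem hW }
  property t ht := (𝒰.mem_or_compl_mem _).imp id
    fun h => mem_of_superset h fun W hW => (W.2 t ht).resolve_left hW

lemma mem_limUltrafilter {𝒰 : Ultrafilter (Zar F)} {x : F} :
    x ∈ (limUltrafilter 𝒰).1 ↔ {W : Zar F | x ∈ W.1} ∈ 𝒰 :=
  Iff.rfl

lemma le_nhds_limUltrafilter (𝒰 : Ultrafilter (Zar F)) : ↑𝒰 ≤ 𝓝 (limUltrafilter 𝒰) := by
  rw [← tendsto_id']
  refine TopologicalSpace.tendsto_nhds_generateFrom_iff.mpr ?_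
  rintro s (⟨x, rfl⟩ | ⟨x, rfl⟩) hs
  · exact mem_limUltrafilter.mp hs
  · exact Ultrafilter.compl_mem_iff_notMem.mpr (mt mem_limUltrafilter.mpr hs)

instance : CompactSpace (Zar F) :=
  isCompact_univ_iff.mp <| isCompact_iff_ultrafilter_le_nhds'.mpr
    fun 𝒰 _ => ⟨limUltrafilter 𝒰, mem_univ _, le_nhds_limUltrafilter 𝒰⟩

lemma mem_limPts_of_accPt {X : Set (Zar F)} {V : Zar F} (h : AccPt V (𝓟 X)) : V ∈ limPts X := by
  intro U hU hVU
  obtain ⟨W, ⟨hWU, hWX⟩, hWV⟩ := accPt_iff_nhds.mp h U (hU.mem_nhds hVU)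
  exact ⟨W, hWX, hWV, hWU⟩

lemma finite_inter_of_limPts_subset {X Y K : Set (Zar F)} (hXY : limPts X ⊆ Y) (hK : IsClosed K)
    (hYK : Disjoint Y K) : (X ∩ K).Finite := by
  by_contra hinf
  obtain ⟨V, hVK, hV⟩ :=
    Set.Infinite.exists_accPt_of_subset_isCompact hinf hK.isCompact inter_subset_right
  exact hYK.ne_of_mem (hXY (mem_limPts_of_accPt (hV.mono (principal_mono.mpr inter_subset_left))))
    hVK rfl

lemma exists_forall_one_le_valuation_one_add_iterate {E : Set (Zar F)} (hE : E.Finite) (j : F) :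
    ∃ k, ∀ W ∈ E, 1 ≤ W.valuation (1 + (fun y => y * (1 + y))^[k] j) := by
  obtain ⟨k, -, hk⟩ := exists_ge_forall_notMem hE
    (fun W _ => (W.valuation.subsingleton_setOf_map_one_add_iterate_lt_one j).finite) 0
  exact ⟨k, fun W hW => not_lt.mp (hk W hW)⟩

lemma exists_ge_forall_one_le_valuation_one_add_mul_pow {E : Set (Zar F)} (hE : E.Finite) {c : F}
    (hc : ∀ W ∈ E, 1 ≤ W.valuation (1 + c)) (a : F) (n₀ : ℕ) :
    ∃ N ≥ n₀, ∀ W ∈ E, 1 ≤ W.valuation (1 + c * a ^ N) := by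
  have hperiod : ∀ W : Zar F, ∃ d, 0 < d ∧
      ((∃ e, 0 < e ∧ W.valuation (a ^ e - 1) < 1) → W.valuation (a ^ d - 1) < 1) := by
    intro W
    by_cases h : ∃ e, 0 < e ∧ W.valuation (a ^ e - 1) < 1
    · obtain ⟨e, he, hae⟩ := h
      exact ⟨e, he, fun _ => hae⟩
    · exact ⟨1, one_pos, fun h' => absurd h' h⟩
  choose d hd0 hd using hperiod
  -- `D` is a multiple of the order of `a` in each residue field where `a` is a root of unity
  set D := ∏ W ∈ hE.toFinset, d W
  have hD : 0 < D := Finset.prod_pos fun W _ => hd0 W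
  have hbad : ∀ W ∈ E, {M | W.valuation (1 + c * a ^ (D * M)) < 1}.Finite := by
    intro W hW
    by_cases hper : ∃ e, 0 < e ∧ W.valuation (a ^ e - 1) < 1
    · obtain ⟨t, ht⟩ : d W ∣ D := Finset.dvd_prod_of_mem d (hE.mem_toFinset.mpr hW)
      refine Set.finite_empty.subset fun M hM => (hc W hW).not_gt ?_
      refine W.valuation.map_one_add_lt_one_of_map_sub_one_lt_one ?_ hM
      rw [ht, mul_assoc, pow_mul]
      exact W.valuation.map_pow_sub_one_lt_one (hd W hper) _
    · push Not at hper
      exact ((W.valuation.subsingleton_setOf_map_one_add_mul_pow_lt_one hper c).preimage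
        (mul_right_injective₀ hD.ne')).finite
  obtain ⟨M, hM, hMgood⟩ := exists_ge_forall_notMem hE hbad n₀
  exact ⟨D * M, hM.trans (Nat.le_mul_of_pos_left M hD), fun W hW => not_lt.mp (hMgood W hW)⟩

lemma exists_notMem_valuation_lt_one_one_le_valuation_one_add {X₁ X₂ : Set (Zar F)}
    (h1 : ∀ W ∈ X₁, RankOne W) (hlim : limPts X₁ ⊆ X₂) {a j : F} (ha : ∀ V ∈ X₂, a ∈ V.1)
    (hj : ∀ V ∈ X₂, V.valuation j < 1) (hj0 : j ≠ 0) {W₁ V₂ : Zar F} (hW₁ : W₁ ∈ X₁)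
    (haW₁ : a ∉ W₁.1) (hV₂ : V₂ ∈ X₂) :
    ∃ s, s ∉ W₁.1 ∧ (∀ V ∈ X₂, V.valuation s < 1) ∧ ∀ W ∈ X₁, 1 ≤ W.valuation (1 + s) := by
  set E := X₁ ∩ {W : Zar F | W.valuation a ≤ 1 ∧ W.valuation j < 1}ᶜ
  have hE : E.Finite := by
    refine finite_inter_of_limPts_subset hlim (isClosed_compl_iff.mpr ?_)
      (disjoint_compl_right_iff_subset.mpr fun V hV =>
        ⟨valuation_le_one_iff.mpr (ha V hV), hj V hV⟩)
    exact (isOpen_setOf_valuation_le_one a).inter (isOpen_setOf_valuation_lt_one hj0)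
  obtain ⟨k, hk⟩ := exists_forall_one_le_valuation_one_add_iterate hE j
  set c := (fun y => y * (1 + y))^[k] j
  have hc0 : c ≠ 0 := by
    rwa [← V₂.valuation.ne_zero_iff, V₂.valuation.map_iterate_mul_one_add (hj V₂ hV₂),
      V₂.valuation.ne_zero_iff]
  obtain ⟨n₀, hn₀⟩ := (h1 W₁ hW₁).exists_forall_ge_mul_pow_notMem haW₁ hc0
  obtain ⟨N, hN, hNE⟩ := exists_ge_forall_one_le_valuation_one_add_mul_pow hE hk a n₀
  have hs : ∀ W : Zar F, W.valuation a ≤ 1 → W.valuation j < 1 → W.valuation (c * a ^ N) < 1 := by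
    intro W haW hjW
    rw [map_mul, map_pow, W.valuation.map_iterate_mul_one_add hjW]
    exact mul_lt_one_of_lt_of_le hjW (pow_le_one' haW N)
  refine ⟨c * a ^ N, hn₀ N hN, fun V hV => hs V (valuation_le_one_iff.mpr (ha V hV)) (hj V hV),
    fun W hW => ?_⟩
  by_cases hWE : W ∈ E
  · exact hNE W hWE
  · obtain ⟨haW, hjW⟩ : W.valuation a ≤ 1 ∧ W.valuation j < 1 := by simpa [E, hW] using hWE
    exact (W.valuation.map_one_add_of_lt (hs W haW hjW)).ge

end Zar

theorem stmt14 (X₁ X₂ : Set (Zar F)) (h1 : ∀ V ∈ X₁, RankOne V)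
    (h2 : X₂.Nonempty) (hJ : jSet X₂ ≠ {0}) (hlim : limPts X₁ ⊆ X₂)
    (hloc : IsLocalRing ↥(ASub X₁ ⊓ ASub X₂)) :
    aSet X₁ ∩ aSet X₂ = aSet X₂ := by
  refine inter_eq_right.mpr fun a ha => mem_iInter₂.mpr fun W₁ hW₁ => ?_
  by_contra haW₁
  obtain ⟨V₂, hV₂⟩ := h2
  obtain ⟨j, hj, hj0⟩ := Zar.exists_mem_jSet_ne_zero hJ
  obtain ⟨s, hsW₁, hsX₂, hsX₁⟩ :=
    Zar.exists_notMem_valuation_lt_one_one_le_valuation_one_add h1 hlim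
      (fun V hV => mem_iInter₂.mp ha V hV)
      (fun V hV => Zar.valuation_lt_one_iff.mpr (mem_iInter₂.mp hj V hV)) hj0 hW₁ haW₁ hV₂
  have hu : (1 + s)⁻¹ ∈ ASub X₁ ⊓ ASub X₂ := Subring.mem_inf.mpr
    ⟨Zar.mem_ASub.mpr fun W hW => Zar.inv_mem_of_one_le_valuation (hsX₁ W hW),
      Zar.mem_ASub.mpr fun V hV =>
        Zar.inv_mem_of_one_le_valuation (V.valuation.map_one_add_of_lt (hsX₂ V hV)).ge⟩
  have hs0 : s ≠ 0 := by rintro rfl; exact hsW₁ W₁.1.zero_mem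
  have h1s : 1 + s ≠ 0 := by
    intro h
    exact hsW₁ (eq_neg_of_add_eq_zero_right h ▸ W₁.1.neg_mem W₁.1.one_mem)
  rcases Subring.inv_mem_or_inv_one_sub_mem hu with h | h
  · rw [inv_inv] at h
    have h1sW₁ := Zar.mem_ASub.mp (Subring.mem_inf.mp h).1 W₁ hW₁
    exact hsW₁ (by simpa using W₁.1.sub_mem h1sW₁ W₁.1.one_mem)
  · have h1u : 1 - (1 + s)⁻¹ = s / (1 + s) := by field_simp; ring
    rw [h1u, inv_div, add_div, div_self hs0, one_div] at h
    refine ((Zar.valuation_lt_one_iff.mp (hsX₂ V₂ hV₂)).2.resolve_left hs0) ?_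
    simpa using V₂.1.sub_mem (Zar.mem_ASub.mp (Subring.mem_inf.mp h).2 V₂ hV₂) V₂.1.one_mem
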